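/- arXiv:1701.03899 — 5 statements merged into one kernel-verified Lean document; each statement's English description precedes it below -/
import Mathlib

section
/- Assume K ≠ 0. Then the function f attains a positive maximum λ1 at some unit vector e1, and there exists an orthonormal basis {e1, e2, …, en} of V such that K(e1, ei) = λi·ei for i = 1, …, n (with λ1 = f(e1)). Moreover, for every i ≥ 2 the eigenvalue λi satisfies (λ1 − 2λi)(ε − λ1λi + λi²) = 0; and for i ≥ 2, if λ1 = 2λi then f(ei) = 0, while if λ1 ≠ 2λi then λ1² − 4ε > 0 and λi = (1/2)(λ1 − √(λ1² − 4ε)). -/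
/-!
Let `f(u) = ⟨K(u,u),u⟩` attain its maximum `λ₁` on the unit sphere at `e₁`; `λ₁ > 0` because `f` is
odd and, by polarization of the totally symmetric cubic form, vanishes identically only when
`K = 0`. For a unit `v ⊥ e₁`, restricting `f` to the great circle through `e₁` and `v` and
clearing denominators in its rational parametrization gives a polynomial inequality in `t`
whose lowest-order coefficients at `t = 0` must have the right signs: the first-order one forces
`⟨K(e₁,e₁),v⟩ = 0`, i.e. `K(e₁,e₁) = λ₁e₁`; the second-order one gives `⟨K(e₁,v),v⟩ ≤ λ₁/2`; and
when equality holds the third-order one gives `f(v) = 0`. Since `K(e₁,·)` is self-adjoint and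
preserves `e₁^⊥`, it is diagonalized by an orthonormal basis starting with `e₁`. Evaluating the
parallelism identity on `(e₁, eᵢ, e₁, e₁)` yields `(λ₁ - 2λᵢ)(ε - λ₁λᵢ + λᵢ²) = 0`, and with
`λᵢ ≤ λ₁/2` the quadratic factor selects the smaller root.
-/

open scoped RealInnerProductSpace
open Module Submodule

noncomputable section

variable {V : Type*} [NormedAddCommGroup V] [InnerProductSpace ℝ V]

/-- The curvature-type operator built from `ε` and the difference tensor `K`:
`R(X,Y)Z = ε(⟨Y,Z⟩X − ⟨X,Z⟩Y) − K(X,K(Y,Z)) + K(Y,K(X,Z))`. -/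
def Rc (ε : ℝ) (K : V →ₗ[ℝ] V →ₗ[ℝ] V) (X Y Z : V) : V :=
  ε • (⟪Y, Z⟫ • X - ⟪X, Z⟫ • Y) - K X (K Y Z) + K Y (K X Z)

open Filter Topology in
theorem nonneg_of_forall_pos_nonneg {g : ℝ → ℝ} (hg : ContinuousAt g 0)
    (h : ∀ t > 0, 0 ≤ g t) : 0 ≤ g 0 :=
  ge_of_tendsto (hg.tendsto.mono_left (nhdsWithin_le_nhds (s := Set.Ioi 0)))
    (eventually_nhdsWithin_of_forall h)

theorem nonneg_of_forall_sq_mul_nonneg {g : ℝ → ℝ} (hg : ContinuousAt g 0)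
    (h : ∀ t, 0 ≤ t ^ 2 * g t) : 0 ≤ g 0 :=
  nonneg_of_forall_pos_nonneg hg fun t ht => nonneg_of_mul_nonneg_right (h t) (by positivity)

theorem eq_zero_of_forall_pow_mul_nonneg {g : ℝ → ℝ} {k : ℕ} (hk : Odd k)
    (hg : ContinuousAt g 0) (h : ∀ t, 0 ≤ t ^ k * g t) : g 0 = 0 := by
  have hpos : 0 ≤ g 0 :=
    nonneg_of_forall_pos_nonneg hg fun t ht => nonneg_of_mul_nonneg_right (h t) (by positivity)
  have hneg := nonneg_of_forall_pos_nonneg (g := fun t => -g (-t))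
    (hg.comp_of_eq continuous_neg.continuousAt neg_zero).neg fun t ht => by
      have := h (-t)
      rw [hk.neg_pow] at this
      exact nonneg_of_mul_nonneg_right (by linarith) (by positivity : 0 < t ^ k)
  simp only [neg_zero] at hneg
  linarith

theorem eq_sub_sqrt_of_mul_eq_zero {lam l ε : ℝ} (h : (lam - 2 * l) * (ε - lam * l + l ^ 2) = 0)
    (hle : l ≤ lam / 2) (hne : lam ≠ 2 * l) :
    0 < lam ^ 2 - 4 * ε ∧ l = (lam - Real.sqrt (lam ^ 2 - 4 * ε)) / 2 := by
  have hroot : ε - lam * l + l ^ 2 = 0 := (mul_eq_zero.mp h).resolve_left (sub_ne_zero.mpr hne)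
  have hdisc : lam ^ 2 - 4 * ε = (lam - 2 * l) ^ 2 := by linear_combination (-4) * hroot
  rw [hdisc, Real.sqrt_sq (by linarith)]
  exact ⟨sq_pos_iff.mpr (sub_ne_zero.mpr hne), by ring⟩

theorem exists_orthonormalBasis_cons {m : ℕ} (hm : finrank ℝ V = m + 1) {e : V} (he : ‖e‖ = 1)
    (c : OrthonormalBasis (Fin m) ℝ (ℝ ∙ e)ᗮ) :
    ∃ b : OrthonormalBasis (Fin (m + 1)) ℝ V, ⇑b = Fin.cons e fun j => (c j : V) := by
  have hce : ∀ j, ⟪e, (c j : V)⟫ = 0 := fun j =>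
    mem_orthogonal_singleton_iff_inner_right.mp (c j).2
  have hon : Orthonormal ℝ (Fin.cons e fun j => (c j : V) : Fin (m + 1) → V) := by
    rw [orthonormal_iff_ite]
    intro i j
    cases i using Fin.cases <;> cases j using Fin.cases
    all_goals simp [hce, he, real_inner_comm e, Fin.succ_ne_zero, (Fin.succ_ne_zero _).symm,
      ← Submodule.coe_inner, orthonormal_iff_ite.mp c.orthonormal]
  have hspan := hon.linearIndependent.span_eq_top_of_card_eq_finrank (by simp [hm])
  exact ⟨OrthonormalBasis.mk hon hspan.ge, OrthonormalBasis.coe_mk _ _⟩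

theorem LinearMap.IsSymmetric.exists_orthonormalBasis_eigenvectors_cons [FiniteDimensional ℝ V]
    {T : V →ₗ[ℝ] V} (hT : T.IsSymmetric) {m : ℕ} (hm : finrank ℝ V = m + 1) {e : V} {μ : ℝ} (he : ‖e‖ = 1)
    (hTe : T e = μ • e) :
    ∃ (b : OrthonormalBasis (Fin (m + 1)) ℝ V) (lam : Fin (m + 1) → ℝ),
      b 0 = e ∧ lam 0 = μ ∧ ∀ i, T (b i) = lam i • b i := by
  have hW : ∀ w ∈ (ℝ ∙ e)ᗮ, T w ∈ (ℝ ∙ e)ᗮ := fun w hw => by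
    rw [mem_orthogonal_singleton_iff_inner_right] at hw ⊢
    rw [← hT, hTe, real_inner_smul_left, hw, mul_zero]
  have hWrank : finrank ℝ (ℝ ∙ e)ᗮ = m := by
    have := (ℝ ∙ e).finrank_add_finrank_orthogonal
    rw [finrank_span_singleton (norm_ne_zero_iff.mp (he ▸ one_ne_zero)), hm] at this
    omega
  have hTW := hT.restrict_invariant hW
  obtain ⟨b, hb⟩ := exists_orthonormalBasis_cons hm he (hTW.eigenvectorBasis hWrank)
  refine ⟨b, Fin.cons μ (hTW.eigenvalues hWrank), by simp [hb], rfl, fun i => ?_⟩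
  cases i using Fin.cases with
  | zero => simpa [hb] using hTe
  | succ j =>
    have := congrArg Subtype.val (hTW.apply_eigenvectorBasis hWrank j)
    simp only [hb, Fin.cons_succ]
    simpa only [LinearMap.coe_restrict_apply, Submodule.coe_smul, RCLike.ofReal_real_eq_id, id_eq]
      using this

theorem norm_stereographic {e v : V} (he : ‖e‖ = 1) (hv : ‖v‖ = 1) (hev : ⟪e, v⟫ = 0) (t : ℝ) :
    ‖(1 - t ^ 2) • e + (2 * t) • v‖ = 1 + t ^ 2 := by
  have horth : ⟪(1 - t ^ 2) • e, (2 * t) • v⟫ = 0 := by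
    rw [real_inner_smul_left, real_inner_smul_right, hev, mul_zero, mul_zero]
  have hsq := norm_add_sq_eq_norm_sq_add_norm_sq_real horth
  rw [norm_smul, norm_smul, he, hv, Real.norm_eq_abs, Real.norm_eq_abs] at hsq
  nlinarith [norm_nonneg ((1 - t ^ 2) • e + (2 * t) • v), abs_mul_abs_self (1 - t ^ 2),
    abs_mul_abs_self (2 * t)]

theorem exists_unit_isMax_cubic [FiniteDimensional ℝ V] [Nontrivial V] (K : V →ₗ[ℝ] V →ₗ[ℝ] V) :
    ∃ e : V, ‖e‖ = 1 ∧ ∀ u : V, ‖u‖ = 1 → ⟪K u u, u⟫ ≤ ⟪K e e, e⟫ := by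
  have hK : Continuous fun u => (LinearMap.toContinuousLinearMap.toLinearMap ∘ₗ K) u :=
    LinearMap.continuous_of_finiteDimensional _
  have hf : Continuous fun u : V => ⟪K u u, u⟫ := (hK.clm_apply continuous_id).inner continuous_id
  obtain ⟨e, he, hmax⟩ := (isCompact_sphere (0 : V) 1).exists_isMaxOn
    (NormedSpace.sphere_nonempty.mpr zero_le_one) hf.continuousOn
  exact ⟨e, by simpa using he, fun u hu => hmax (by simpa using hu)⟩

section CubicForm

variable {K : V →ₗ[ℝ] V →ₗ[ℝ] V}

theorem cubic_smul (t : ℝ) (x : V) : ⟪K (t • x) (t • x), t • x⟫ = t ^ 3 * ⟪K x x, x⟫ := by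
  simp only [map_smul, LinearMap.smul_apply, real_inner_smul_left, real_inner_smul_right]
  ring

theorem cubic_smul_add_smul (hKsymm : ∀ X Y : V, K X Y = K Y X)
    (hKcub : ∀ X Y Z : V, ⟪K X Y, Z⟫ = ⟪K X Z, Y⟫) (x y : V) (c s : ℝ) :
    ⟪K (c • x + s • y) (c • x + s • y), c • x + s • y⟫ =
      c ^ 3 * ⟪K x x, x⟫ + 3 * c ^ 2 * s * ⟪K x x, y⟫ + 3 * c * s ^ 2 * ⟪K x y, y⟫ +
        s ^ 3 * ⟪K y y, y⟫ := by
  have h₁ : ⟪K x y, x⟫ = ⟪K x x, y⟫ := hKcub x y x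
  have h₂ : ⟪K y y, x⟫ = ⟪K x y, y⟫ := by rw [hKcub, hKsymm]
  simp only [map_add, map_smul, LinearMap.add_apply, LinearMap.smul_apply, inner_add_left,
    inner_add_right, real_inner_smul_left, real_inner_smul_right, hKsymm y x, h₁, h₂]
  ring

theorem eq_zero_of_cubic_eq_zero (hKsymm : ∀ X Y : V, K X Y = K Y X)
    (hKcub : ∀ X Y Z : V, ⟪K X Y, Z⟫ = ⟪K X Z, Y⟫) (h : ∀ x : V, ⟪K x x, x⟫ = 0) : K = 0 := by
  have hxyy : ∀ x y : V, ⟪K x y, y⟫ = 0 := fun x y => by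
    have hp := cubic_smul_add_smul hKsymm hKcub x y 1 1
    have hm := cubic_smul_add_smul hKsymm hKcub x y 1 (-1)
    simp only [h] at hp hm
    linarith
  have hxyz : ∀ x y z : V, ⟪K x y, z⟫ = 0 := fun x y z => by
    have := hxyy x (y + z)
    simp only [map_add, inner_add_left, inner_add_right, hxyy, hKcub x z y] at this
    linarith
  ext x y
  exact inner_self_eq_zero.mp (hxyz x y (K x y))

theorem cubic_le_mul_norm_pow_three {lam : ℝ} (hmax : ∀ u : V, ‖u‖ = 1 → ⟪K u u, u⟫ ≤ lam)
    (w : V) : ⟪K w w, w⟫ ≤ lam * ‖w‖ ^ 3 := by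
  rcases eq_or_ne w 0 with rfl | hw
  · simp
  have hw' : 0 < ‖w‖ := norm_pos_iff.mpr hw
  calc ⟪K w w, w⟫ = ‖w‖ ^ 3 * ⟪K (‖w‖⁻¹ • w) (‖w‖⁻¹ • w), ‖w‖⁻¹ • w⟫ := by
        rw [cubic_smul, ← mul_assoc, ← mul_pow, mul_inv_cancel₀ hw'.ne', one_pow, one_mul]
    _ ≤ ‖w‖ ^ 3 * lam := by gcongr; exact hmax _ (norm_smul_inv_norm hw)
    _ = lam * ‖w‖ ^ 3 := mul_comm _ _

theorem cubic_pos_of_isMax (hKsymm : ∀ X Y : V, K X Y = K Y X)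
    (hKcub : ∀ X Y Z : V, ⟪K X Y, Z⟫ = ⟪K X Z, Y⟫) (hK0 : K ≠ 0) {e : V} (he : ‖e‖ = 1)
    (hmax : ∀ u : V, ‖u‖ = 1 → ⟪K u u, u⟫ ≤ ⟪K e e, e⟫) : 0 < ⟪K e e, e⟫ := by
  have hodd : ∀ w : V, ⟪K (-w) (-w), -w⟫ = -⟪K w w, w⟫ := fun w => by simp
  have hnonneg : 0 ≤ ⟪K e e, e⟫ := by
    have := hmax (-e) (by rwa [norm_neg])
    linarith [hodd e]
  refine hnonneg.lt_of_ne fun h0 => hK0 (eq_zero_of_cubic_eq_zero hKsymm hKcub fun w => ?_)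
  have hle := cubic_le_mul_norm_pow_three hmax
  have h₁ := hle w
  have h₂ := hle (-w)
  rw [← h0, zero_mul] at h₁ h₂
  linarith [hodd w]

/-- `((1 - t²) e + 2t v) / (1 + t²)` parametrizes the great circle through `e` and `v`; this is
maximality of `e` at that point, multiplied by `(1 + t²)³`. -/
theorem cubic_stereographic_le (hKsymm : ∀ X Y : V, K X Y = K Y X)
    (hKcub : ∀ X Y Z : V, ⟪K X Y, Z⟫ = ⟪K X Z, Y⟫) {e v : V} (he : ‖e‖ = 1) (hv : ‖v‖ = 1)
    (hev : ⟪e, v⟫ = 0) (hmax : ∀ u : V, ‖u‖ = 1 → ⟪K u u, u⟫ ≤ ⟪K e e, e⟫) (t : ℝ) :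
    (1 - t ^ 2) ^ 3 * ⟪K e e, e⟫ + 6 * t * (1 - t ^ 2) ^ 2 * ⟪K e e, v⟫ +
      12 * t ^ 2 * (1 - t ^ 2) * ⟪K e v, v⟫ + 8 * t ^ 3 * ⟪K v v, v⟫ ≤
      ⟪K e e, e⟫ * (1 + t ^ 2) ^ 3 := by
  have h := cubic_le_mul_norm_pow_three hmax ((1 - t ^ 2) • e + (2 * t) • v)
  rw [cubic_smul_add_smul hKsymm hKcub, norm_stereographic he hv hev] at h
  linear_combination h

theorem inner_apply_self_eq_zero_of_isMax (hKsymm : ∀ X Y : V, K X Y = K Y X)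
    (hKcub : ∀ X Y Z : V, ⟪K X Y, Z⟫ = ⟪K X Z, Y⟫) {e v : V} (he : ‖e‖ = 1) (hv : ‖v‖ = 1)
    (hev : ⟪e, v⟫ = 0) (hmax : ∀ u : V, ‖u‖ = 1 → ⟪K u u, u⟫ ≤ ⟪K e e, e⟫) :
    ⟪K e e, v⟫ = 0 := by
  set lam := ⟪K e e, e⟫
  set a := ⟪K e v, v⟫
  set b := ⟪K e e, v⟫
  set μ := ⟪K v v, v⟫
  have h := eq_zero_of_forall_pow_mul_nonneg odd_one
    (g := fun t => -6 * b * (1 - t ^ 2) ^ 2 + t * (6 * lam - 12 * a + 12 * a * t ^ 2 - 8 * μ * t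
      + 2 * lam * t ^ 4)) (by fun_prop)
    fun t => by linear_combination cubic_stereographic_le hKsymm hKcub he hv hev hmax t
  linarith

theorem inner_apply_le_half_of_isMax (hKsymm : ∀ X Y : V, K X Y = K Y X)
    (hKcub : ∀ X Y Z : V, ⟪K X Y, Z⟫ = ⟪K X Z, Y⟫) {e v : V} (he : ‖e‖ = 1) (hv : ‖v‖ = 1)
    (hev : ⟪e, v⟫ = 0) (hmax : ∀ u : V, ‖u‖ = 1 → ⟪K u u, u⟫ ≤ ⟪K e e, e⟫) :
    ⟪K e v, v⟫ ≤ ⟪K e e, e⟫ / 2 := by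
  have hb := inner_apply_self_eq_zero_of_isMax hKsymm hKcub he hv hev hmax
  set lam := ⟪K e e, e⟫
  set a := ⟪K e v, v⟫
  set μ := ⟪K v v, v⟫
  have h := nonneg_of_forall_sq_mul_nonneg
    (g := fun t => 6 * lam - 12 * a + t * (12 * a * t - 8 * μ + 2 * lam * t ^ 3)) (by fun_prop)
    fun t => by
      have := cubic_stereographic_le hKsymm hKcub he hv hev hmax t
      rw [hb] at this
      linear_combination this
  linarith

theorem cubic_eq_zero_of_isMax_of_eq_half (hKsymm : ∀ X Y : V, K X Y = K Y X)
    (hKcub : ∀ X Y Z : V, ⟪K X Y, Z⟫ = ⟪K X Z, Y⟫) {e v : V} (he : ‖e‖ = 1) (hv : ‖v‖ = 1)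
    (hev : ⟪e, v⟫ = 0) (hmax : ∀ u : V, ‖u‖ = 1 → ⟪K u u, u⟫ ≤ ⟪K e e, e⟫)
    (hhalf : ⟪K e v, v⟫ = ⟪K e e, e⟫ / 2) : ⟪K v v, v⟫ = 0 := by
  have hb := inner_apply_self_eq_zero_of_isMax hKsymm hKcub he hv hev hmax
  set lam := ⟪K e e, e⟫
  set μ := ⟪K v v, v⟫
  have h := eq_zero_of_forall_pow_mul_nonneg (k := 3) (by decide)
    (g := fun t => -8 * μ + t * (6 * lam + 2 * lam * t ^ 2)) (by fun_prop)
    fun t => by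
      have := cubic_stereographic_le hKsymm hKcub he hv hev hmax t
      rw [hb, hhalf] at this
      linear_combination this
  linarith

theorem apply_self_eq_smul_of_isMax (hKsymm : ∀ X Y : V, K X Y = K Y X)
    (hKcub : ∀ X Y Z : V, ⟪K X Y, Z⟫ = ⟪K X Z, Y⟫) {e : V} (he : ‖e‖ = 1)
    (hmax : ∀ u : V, ‖u‖ = 1 → ⟪K u u, u⟫ ≤ ⟪K e e, e⟫) : K e e = ⟪K e e, e⟫ • e := by
  have horth : ∀ w, ⟪e, w⟫ = 0 → ⟪K e e, w⟫ = 0 := fun w hw => by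
    rcases eq_or_ne w 0 with rfl | hw0
    · exact inner_zero_right _
    have h := inner_apply_self_eq_zero_of_isMax hKsymm hKcub he (norm_smul_inv_norm hw0)
      (by rw [real_inner_smul_right, hw, mul_zero]) hmax
    rw [real_inner_smul_right] at h
    exact (mul_eq_zero.mp h).resolve_left (inv_ne_zero (norm_ne_zero_iff.mpr hw0))
  set d := K e e - ⟪K e e, e⟫ • e
  have hd : ⟪e, d⟫ = 0 := by
    rw [inner_sub_right, real_inner_smul_right, real_inner_self_eq_norm_sq, he, real_inner_comm]
    ring
  rw [← sub_eq_zero, ← inner_self_eq_zero (𝕜 := ℝ)]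
  calc ⟪d, d⟫ = ⟪K e e, d⟫ - ⟪K e e, e⟫ * ⟪e, d⟫ := by rw [inner_sub_left, real_inner_smul_left]
    _ = 0 := by rw [horth d hd, hd]; ring

theorem mul_eq_zero_of_parallel {ε : ℝ} (hKsymm : ∀ X Y : V, K X Y = K Y X)
    (hpar : ∀ X Y Z U : V, Rc ε K X Y (K Z U) = K (Rc ε K X Y Z) U + K Z (Rc ε K X Y U))
    {e v : V} {lam l : ℝ} (he : ‖e‖ = 1) (hv : v ≠ 0) (hev : ⟪e, v⟫ = 0)
    (hKe : K e e = lam • e) (hKv : K e v = l • v) :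
    (lam - 2 * l) * (ε - lam * l + l ^ 2) = 0 := by
  have hee : ⟪e, e⟫ = 1 := by rw [real_inner_self_eq_norm_sq, he, one_pow]
  have hve : ⟪v, e⟫ = 0 := by rw [real_inner_comm, hev]
  have h := hpar e v e e
  simp only [Rc, hKe, map_smul, LinearMap.smul_apply, map_sub, map_add, LinearMap.sub_apply,
    LinearMap.add_apply, hKsymm v e, hKv, real_inner_smul_right, hve, hee] at h
  have h' : ((lam - 2 * l) * (ε - lam * l + l ^ 2)) • v = 0 := by
    linear_combination (norm := module) -h
  exact (smul_eq_zero.mp h').resolve_right hv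

theorem eigenvalue_relations_of_isMax {ε : ℝ} (hKsymm : ∀ X Y : V, K X Y = K Y X)
    (hKcub : ∀ X Y Z : V, ⟪K X Y, Z⟫ = ⟪K X Z, Y⟫)
    (hpar : ∀ X Y Z U : V, Rc ε K X Y (K Z U) = K (Rc ε K X Y Z) U + K Z (Rc ε K X Y U))
    {e v : V} {l : ℝ} (he : ‖e‖ = 1) (hv : ‖v‖ = 1) (hev : ⟪e, v⟫ = 0)
    (hmax : ∀ u : V, ‖u‖ = 1 → ⟪K u u, u⟫ ≤ ⟪K e e, e⟫) (hKv : K e v = l • v) :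
    (⟪K e e, e⟫ - 2 * l) * (ε - ⟪K e e, e⟫ * l + l ^ 2) = 0 ∧
      (⟪K e e, e⟫ = 2 * l → ⟪K v v, v⟫ = 0) ∧
      (⟪K e e, e⟫ ≠ 2 * l →
        0 < ⟪K e e, e⟫ ^ 2 - 4 * ε ∧
        l = (⟪K e e, e⟫ - Real.sqrt (⟪K e e, e⟫ ^ 2 - 4 * ε)) / 2) := by
  have hl : ⟪K e v, v⟫ = l := by
    rw [hKv, real_inner_smul_left, real_inner_self_eq_norm_sq, hv, one_pow, mul_one]
  have hrel := mul_eq_zero_of_parallel hKsymm hpar he (norm_ne_zero_iff.mp (hv ▸ one_ne_zero))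
    hev (apply_self_eq_smul_of_isMax hKsymm hKcub he hmax) hKv
  have hle : l ≤ ⟪K e e, e⟫ / 2 := hl ▸ inner_apply_le_half_of_isMax hKsymm hKcub he hv hev hmax
  refine ⟨hrel, fun h => cubic_eq_zero_of_isMax_of_eq_half hKsymm hKcub he hv hev hmax ?_,
    eq_sub_sqrt_of_mul_eq_zero hrel hle⟩
  rw [hl, h]
  ring

end CubicForm

/-- Lemma 4.1: if `K ≠ 0`, the function `f(u) = ⟨K(u,u),u⟩` attains a positive maximum
`λ₁` at some unit vector `e₁`, and there is an orthonormal basis `{e₁,…,e_n}`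
diagonalizing `K(e₁,·)`, whose eigenvalues `λ_i` satisfy the stated relations. -/
theorem stmt_0 {V : Type*} [NormedAddCommGroup V] [InnerProductSpace ℝ V]
    (n : ℕ) (hn : finrank ℝ V = n) (hn2 : 2 ≤ n)
    (ε : ℝ)
    (K : V →ₗ[ℝ] V →ₗ[ℝ] V)
    (hKsymm : ∀ X Y : V, K X Y = K Y X)
    (hKcub : ∀ X Y Z : V, ⟪K X Y, Z⟫ = ⟪K X Z, Y⟫)
    (hpar : ∀ X Y Z U : V,
      Rc ε K X Y (K Z U) = K (Rc ε K X Y Z) U + K Z (Rc ε K X Y U))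
    (hK0 : K ≠ 0) :
    ∃ (e1 : V) (lam1 : ℝ), ‖e1‖ = 1 ∧ lam1 = ⟪K e1 e1, e1⟫ ∧ 0 < lam1 ∧
      (∀ u : V, ‖u‖ = 1 → ⟪K u u, u⟫ ≤ lam1) ∧
      ∃ (b : OrthonormalBasis (Fin n) ℝ V) (lam : Fin n → ℝ),
        b ⟨0, by omega⟩ = e1 ∧ lam ⟨0, by omega⟩ = lam1 ∧
        (∀ i : Fin n, K e1 (b i) = lam i • b i) ∧
        ∀ i : Fin n, i ≠ ⟨0, by omega⟩ →
          (lam1 - 2 * lam i) * (ε - lam1 * lam i + lam i ^ 2) = 0 ∧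
          (lam1 = 2 * lam i → ⟪K (b i) (b i), b i⟫ = 0) ∧
          (lam1 ≠ 2 * lam i →
            0 < lam1 ^ 2 - 4 * ε ∧
            lam i = (lam1 - Real.sqrt (lam1 ^ 2 - 4 * ε)) / 2) := by
  obtain ⟨m, rfl⟩ : ∃ m, n = m + 1 := ⟨n - 1, by omega⟩
  have : FiniteDimensional ℝ V := .of_finrank_pos (by omega)
  have : Nontrivial V := finrank_pos_iff (R := ℝ).mp (by omega)
  obtain ⟨e1, he1, hmax⟩ := exists_unit_isMax_cubic K
  have hsymm : (K e1).IsSymmetric := fun x y => by rw [hKcub, real_inner_comm]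
  obtain ⟨b, lam, hb0, hlam0, hb⟩ := hsymm.exists_orthonormalBasis_eigenvectors_cons hn he1
    (apply_self_eq_smul_of_isMax hKsymm hKcub he1 hmax)
  refine ⟨e1, _, he1, rfl, cubic_pos_of_isMax hKsymm hKcub hK0 he1 hmax, hmax, b, lam, hb0, hlam0, hb,
    fun i hi => ?_⟩
  have hei : ⟪e1, b i⟫ = 0 := hb0 ▸ b.orthonormal.2 (Ne.symm hi)
  exact eigenvalue_relations_of_isMax hKsymm hKcub hpar he1 (b.orthonormal.1 i) hei hmax (hb i)

end
end

section
/- Let e1 be a unit vector at which f attains its maximum over the unit sphere of V, with λ1 := f(e1) > 0. If every vector v orthogonal to e1 satisfies K(e1, v) = (λ1/2)·v, then necessarily λ1² = 4ε; in particular ε = 1 and λ1 = 2. Equivalently, Case C_n — in which K(e1,·) has eigenvalue λ1/2 on the whole orthogonal complement of e1 while λ1² − 4ε ≠ 0 — cannot occur. -/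
open scoped RealInnerProductSpace
open Module Submodule

noncomputable section

variable {V : Type*} [NormedAddCommGroup V] [InnerProductSpace ℝ V]

/-!
Pick a unit vector `v ⟂ e₁` and put `μ = λ₁²/4 − ε`. The eigenvalue hypothesis forces
`K(e₁,e₁) = λ₁e₁` and `K(v,v) = (λ₁/2)e₁ + w` with `w ⟂ e₁`, and then
`R(e₁,v)e₁ = μv`, `R(e₁,v)v = −μe₁`. Parallelism applied to `K(e₁,v)` gives `μw = 0`;
if `w = 0`, parallelism applied to `K(v,v)` gives `(3/2)λ₁μv = 0`. Either way `μ = 0`.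
-/

theorem exists_norm_eq_one_inner_eq_zero (h : 1 < finrank ℝ V) (e : V) :
    ∃ v : V, ‖v‖ = 1 ∧ ⟪e, v⟫ = 0 := by
  have : FiniteDimensional ℝ V := .of_finrank_pos (by omega)
  have hrank := (ℝ ∙ e).finrank_add_finrank_orthogonal
  have hne : (ℝ ∙ e)ᗮ ≠ ⊥ := by
    intro hbot
    rw [hbot, finrank_bot] at hrank
    have : finrank ℝ (ℝ ∙ e) ≤ 1 := by
      simpa using finrank_span_le_card (R := ℝ) ({e} : Set V)
    omega
  obtain ⟨x, hx, hx0⟩ := exists_mem_ne_zero_of_ne_bot hne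
  refine ⟨‖x‖⁻¹ • x, norm_smul_inv_norm hx0, ?_⟩
  rw [inner_smul_right, mem_orthogonal_singleton_iff_inner_right.mp hx, mul_zero]

theorem Rc_smul_right (ε : ℝ) (K : V →ₗ[ℝ] V →ₗ[ℝ] V) (X Y : V) (c : ℝ) (Z : V) :
    Rc ε K X Y (c • Z) = c • Rc ε K X Y Z := by
  simp only [Rc, inner_smul_right, map_smul, smul_sub, smul_add]
  module

section CaseC

variable {ε c : ℝ} {K : V →ₗ[ℝ] V →ₗ[ℝ] V} {e v : V}

/-- `K(e,e) − ⟨K(e,e),e⟩e` lies in `e⟂`, and the cubic symmetry makes it orthogonal to itself. -/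
theorem apply_self_eq_smul_of_eigen (hKcub : ∀ X Y Z : V, ⟪K X Y, Z⟫ = ⟪K X Z, Y⟫)
    (he : ⟪e, e⟫ = 1) (heig : ∀ u : V, ⟪e, u⟫ = 0 → K e u = c • u) :
    K e e = ⟪K e e, e⟫ • e := by
  set p := K e e - ⟪K e e, e⟫ • e
  have hep : ⟪e, p⟫ = 0 := by
    rw [inner_sub_right, inner_smul_right, he, real_inner_comm]
    ring
  have hpp : ⟪p, p⟫ = 0 := by
    calc ⟪p, p⟫ = ⟪K e e, p⟫ - ⟪K e e, e⟫ * ⟪e, p⟫ := by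
          rw [inner_sub_left, real_inner_smul_left]
      _ = 0 := by
          rw [hKcub, heig p hep, real_inner_smul_left, real_inner_comm, hep]
          ring
  exact sub_eq_zero.mp (inner_self_eq_zero.mp hpp)

section

variable (hKe : K e e = c • e) (hKev : K e v = (c / 2) • v)
include hKe hKev

theorem Rc_left_eq (hKsymm : ∀ X Y : V, K X Y = K Y X) (he : ⟪e, e⟫ = 1) (hve : ⟪v, e⟫ = 0) :
    Rc ε K e v e = (c ^ 2 / 4 - ε) • v := by
  simp only [Rc, hve, he, hKsymm v e, hKev, hKe, map_smul]
  module

theorem Rc_right_eq {w : V} (hv : ⟪v, v⟫ = 1) (hev : ⟪e, v⟫ = 0)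
    (hKvv : K v v = (c / 2) • e + w) (hKew : K e w = (c / 2) • w) :
    Rc ε K e v v = -(c ^ 2 / 4 - ε) • e := by
  simp only [Rc, hv, hev, hKvv, map_add, map_smul, hKe, hKew, hKev]
  module

end

theorem sq_eq_four_mul_of_parallel (hKsymm : ∀ X Y : V, K X Y = K Y X)
    (hKcub : ∀ X Y Z : V, ⟪K X Y, Z⟫ = ⟪K X Z, Y⟫)
    (hpar : ∀ X Y Z U : V, Rc ε K X Y (K Z U) = K (Rc ε K X Y Z) U + K Z (Rc ε K X Y U))
    (he : ⟪e, e⟫ = 1) (hv : ⟪v, v⟫ = 1) (hev : ⟪e, v⟫ = 0) (hc : c ≠ 0)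
    (heig : ∀ u : V, ⟪e, u⟫ = 0 → K e u = (c / 2) • u) (hKe : K e e = c • e) :
    c ^ 2 = 4 * ε := by
  have hve : ⟪v, e⟫ = 0 := inner_eq_zero_symm.mp hev
  have hKev := heig v hev
  set w := K v v - (c / 2) • e
  have hKvv : K v v = (c / 2) • e + w := by simp only [w, add_sub_cancel]
  have hew : ⟪e, w⟫ = 0 := by
    rw [inner_sub_right, real_inner_comm, hKcub, hKsymm, hKev, inner_smul_right,
      real_inner_smul_left, hv, he]
    ring
  have hRe := Rc_left_eq (ε := ε) hKe hKev hKsymm he hve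
  have hRv := Rc_right_eq (ε := ε) hKe hKev hv hev hKvv (heig w hew)
  set μ := c ^ 2 / 4 - ε with hμ_def
  suffices μ = 0 by linarith
  have hμw : μ • w = 0 := by
    have hp := hpar e v e v
    rw [hKev, Rc_smul_right, hRv, hRe] at hp
    simp only [map_smul, LinearMap.smul_apply, hKe, hKvv] at hp
    linear_combination (norm := module) -hp
  rcases smul_eq_zero.mp hμw with hμ | hw
  · exact hμ
  have hp := hpar e v v v
  rw [hKvv, hw, add_zero, Rc_smul_right, hRe, hRv] at hp
  simp only [map_smul, LinearMap.smul_apply, hKsymm v e, hKev] at hp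
  have hcμv : ((3 * c / 2) * μ) • v = 0 := by
    linear_combination (norm := module) hp
  have hv0 : v ≠ 0 := by
    rintro rfl
    simp at hv
  simpa [hc, hv0] using hcμv

end CaseC

theorem stmt_1_general {V : Type*} [NormedAddCommGroup V] [InnerProductSpace ℝ V]
    (n : ℕ) (hn : finrank ℝ V = n) (hn2 : 2 ≤ n)
    (ε : ℝ) (hε : ε = 1 ∨ ε = -1)
    (K : V →ₗ[ℝ] V →ₗ[ℝ] V)
    (hKsymm : ∀ X Y : V, K X Y = K Y X)
    (hKcub : ∀ X Y Z : V, ⟪K X Y, Z⟫ = ⟪K X Z, Y⟫)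
    (hpar : ∀ X Y Z U : V,
      Rc ε K X Y (K Z U) = K (Rc ε K X Y Z) U + K Z (Rc ε K X Y U))
    (e1 : V) (he1 : ‖e1‖ = 1)
    (lam1 : ℝ) (hlam1 : lam1 = ⟪K e1 e1, e1⟫) (hlam1pos : 0 < lam1)
    (heig : ∀ v : V, ⟪e1, v⟫ = 0 → K e1 v = (lam1 / 2) • v) :
    lam1 ^ 2 = 4 * ε ∧ ε = 1 ∧ lam1 = 2 := by
  have hunit {u : V} (hu : ‖u‖ = 1) : ⟪u, u⟫ = 1 := by
    rw [real_inner_self_eq_norm_sq, hu, one_pow]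
  obtain ⟨v, hv, hev⟩ := exists_norm_eq_one_inner_eq_zero (by omega) e1
  have hKe : K e1 e1 = lam1 • e1 := by
    rw [hlam1]
    exact apply_self_eq_smul_of_eigen hKcub (hunit he1) heig
  have hsq : lam1 ^ 2 = 4 * ε :=
    sq_eq_four_mul_of_parallel hKsymm hKcub hpar (hunit he1) (hunit hv) hev hlam1pos.ne' heig hKe
  have hε1 : ε = 1 := hε.resolve_right fun h => by nlinarith
  exact ⟨hsq, hε1, by nlinarith⟩

/-- Theorem 4.2: Case `C_n` cannot occur: if `K(e₁,·)` has eigenvalue `λ₁/2` on the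
whole orthogonal complement of the maximizer `e₁`, then `λ₁² = 4ε`, i.e. `ε = 1` and
`λ₁ = 2`. -/
theorem stmt_1 {V : Type*} [NormedAddCommGroup V] [InnerProductSpace ℝ V]
    (n : ℕ) (hn : finrank ℝ V = n) (hn2 : 2 ≤ n)
    (ε : ℝ) (hε : ε = 1 ∨ ε = -1)
    (K : V →ₗ[ℝ] V →ₗ[ℝ] V)
    (hKsymm : ∀ X Y : V, K X Y = K Y X)
    (hKcub : ∀ X Y Z : V, ⟪K X Y, Z⟫ = ⟪K X Z, Y⟫)
    (hpar : ∀ X Y Z U : V,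
      Rc ε K X Y (K Z U) = K (Rc ε K X Y Z) U + K Z (Rc ε K X Y U))
    (e1 : V) (he1 : ‖e1‖ = 1)
    (lam1 : ℝ) (hlam1 : lam1 = ⟪K e1 e1, e1⟫) (hlam1pos : 0 < lam1)
    (hmax : ∀ u : V, ‖u‖ = 1 → ⟪K u u, u⟫ ≤ lam1)
    (heig : ∀ v : V, ⟪e1, v⟫ = 0 → K e1 v = (lam1 / 2) • v) :
    lam1 ^ 2 = 4 * ε ∧ ε = 1 ∧ lam1 = 2 :=
  stmt_1_general n hn hn2 ε hε K hKsymm hKcub hpar e1 he1 lam1 hlam1 hlam1pos heig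

end
end

section
/- Suppose the smooth map x satisfies the system of PDEs: ∂²x/∂u1² = 2·∂x/∂u1 − x; ∂²x/∂u1∂uk = ∂x/∂uk for 2 ≤ k ≤ n; ∂²x/∂uk² = ∂x/∂u1 − x for 2 ≤ k ≤ n; and ∂²x/∂uk∂uj = 0 for 2 ≤ j, k ≤ n with j ≠ k. Then there exist constant vectors A1, …, A_{n+1} ∈ ℝ^{n+1} such that x(u1, …, un) = ((1/2)Σ_{k=2}^{n} u_k² + u1)·e^{u1}·A1 + Σ_{k=2}^{n} u_k·e^{u1}·A_k + e^{u1}·A_{n+1}. (This is the integration step showing that in the exceptional Case B the hypersurface is, up to a centroaffine transformation, the graph x_{n+1} = (1/(2x1))Σ_{k=2}^{n} x_k² + x1·ln x1.) -/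
noncomputable section

def pd {n m : ℕ} (i : Fin n) (x : (Fin n → ℝ) → (Fin m → ℝ)) :
    (Fin n → ℝ) → (Fin m → ℝ) :=
  fun u => fderiv ℝ x u (Pi.single i 1)

section helpers
variable {n m : ℕ}

lemma pd_smooth (i : Fin n) {x : (Fin n → ℝ) → (Fin m → ℝ)} (hx : ContDiff ℝ (⊤ : ℕ∞) x) :
    ContDiff ℝ (⊤ : ℕ∞) (pd i x) :=
  (hx.fderiv_right (by simp)).clm_apply contDiff_const

lemma pd_comm {x : (Fin n → ℝ) → (Fin m → ℝ)} (hx : ContDiff ℝ (⊤ : ℕ∞) x) (i j : Fin n)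
    (u : Fin n → ℝ) : pd i (pd j x) u = pd j (pd i x) u := by
  have hd : Differentiable ℝ x := hx.differentiable (by simp)
  have h2 : DifferentiableAt ℝ (fderiv ℝ x) u :=
    ((hx.fderiv_right (m := 1) (WithTop.coe_le_coe.mpr le_top)).differentiable (by simp)) u
  have key : ∀ a b : Fin n, pd a (pd b x) u =
      fderiv ℝ (fderiv ℝ x) u (Pi.single a 1) (Pi.single b 1) := by
    intro a b
    have : pd a (pd b x) u =
        fderiv ℝ (fun v => (fderiv ℝ x v) (Pi.single b 1)) u (Pi.single a 1) := rfl
    rw [this, fderiv_clm_apply h2 (differentiableAt_const _)]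
    simp
  rw [key, key]
  exact second_derivative_symmetric (fun y => (hd y).hasFDerivAt) h2.hasFDerivAt _ _

lemma const_of_pd_zero {f : (Fin n → ℝ) → (Fin m → ℝ)} (hf : Differentiable ℝ f)
    (h : ∀ (j : Fin n) u, fderiv ℝ f u (Pi.single j 1) = 0) (u : Fin n → ℝ) : f u = f 0 := by
  apply is_const_of_fderiv_eq_zero hf
  intro y
  refine ContinuousLinearMap.ext fun v => ?_
  have hv : v = ∑ i, v i • (Pi.single i 1 : Fin n → ℝ) := by
    rw [← Finset.univ_sum_single v]
    refine Finset.sum_congr rfl fun i _ => ?_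
    simp [← Pi.single_smul]
  conv_lhs => rw [hv]
  rw [map_sum]
  simp [h]

lemma pd_app {f : (Fin n → ℝ) → (Fin m → ℝ)} (j : Fin n) (u : Fin n → ℝ) :
    fderiv ℝ f u (Pi.single j 1) = pd j f u := rfl

end helpers

/-- The integration step of Theorem 5.1: a smooth `x : ℝⁿ → ℝ^{n+1}` satisfying
`x_{u₁u₁} = 2x_{u₁} − x`, `x_{u₁u_k} = x_{u_k}`, `x_{u_ku_k} = x_{u₁} − x` and
`x_{u_ku_j} = 0` (`j ≠ k`, `j,k ≥ 2`) has the form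
`x = ((1/2)∑_{k≥2} u_k² + u₁)e^{u₁}A₁ + ∑_{k≥2} u_k e^{u₁}A_k + e^{u₁}A_{n+1}`
for constant vectors `A₁, …, A_{n+1}`. -/
theorem stmt_3 (n : ℕ) (hn : 2 ≤ n)
    (x : (Fin n → ℝ) → (Fin (n + 1) → ℝ)) (hx : ContDiff ℝ (⊤ : ℕ∞) x)
    (h11 : ∀ u, pd (⟨0, by omega⟩ : Fin n) (pd ⟨0, by omega⟩ x) u =
      (2 : ℝ) • pd (⟨0, by omega⟩ : Fin n) x u - x u)
    (h1k : ∀ k : Fin n, k ≠ ⟨0, by omega⟩ →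
      ∀ u, pd (⟨0, by omega⟩ : Fin n) (pd k x) u = pd k x u)
    (hkk : ∀ k : Fin n, k ≠ ⟨0, by omega⟩ →
      ∀ u, pd k (pd k x) u = pd (⟨0, by omega⟩ : Fin n) x u - x u)
    (hjk : ∀ j k : Fin n, j ≠ ⟨0, by omega⟩ → k ≠ ⟨0, by omega⟩ → j ≠ k →
      ∀ u, pd j (pd k x) u = 0) :
    ∃ (A : Fin n → (Fin (n + 1) → ℝ)) (A' : Fin (n + 1) → ℝ),
      ∀ u : Fin n → ℝ,
        x u = Real.exp (u ⟨0, by omega⟩) •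
          ((1 / 2 * ∑ k ∈ Finset.univ.erase (⟨0, by omega⟩ : Fin n), u k ^ 2 +
              u ⟨0, by omega⟩) • A ⟨0, by omega⟩ +
            ∑ k ∈ Finset.univ.erase (⟨0, by omega⟩ : Fin n), u k • A k + A') := by
  classical
  have hn0 : 0 < n := by omega
  set e1 : Fin n := ⟨0, by omega⟩ with he1
  set E : Finset (Fin n) := Finset.univ.erase e1 with hE
  set c : (Fin n → ℝ) → ℝ := fun u => Real.exp (-(u e1)) with hc
  have hdx : Differentiable ℝ x := hx.differentiable (by simp)
  have hdp : ∀ i : Fin n, Differentiable ℝ (pd i x) :=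
    fun i => (pd_smooth i hx).differentiable (by simp)
  -- derivative of c
  have hcHas : ∀ u : Fin n → ℝ, HasFDerivAt c
      (Real.exp (-(u e1)) • (-(ContinuousLinearMap.proj e1 :
        (Fin n → ℝ) →L[ℝ] ℝ))) u := fun u =>
    ((ContinuousLinearMap.proj e1 : (Fin n → ℝ) →L[ℝ] ℝ).hasFDerivAt.neg).exp
  have hcdiff : Differentiable ℝ c := fun u => (hcHas u).differentiableAt
  have hcd : ∀ (u : Fin n → ℝ) (j : Fin n),
      fderiv ℝ c u (Pi.single j 1) = if j = e1 then -(c u) else 0 := by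
    intro u j
    rw [(hcHas u).fderiv]
    by_cases hj : j = e1 <;>
      simp [hj, hc, Pi.single_apply]
  have hcu : ∀ u : Fin n → ℝ, Real.exp (u e1) * c u = 1 := by
    intro u; rw [hc]; simp [← Real.exp_add]
  have hc0 : c 0 = 1 := by simp [hc]
  -- Step 1 : G := c • (pd e1 x - x) is constant
  set A1 : Fin (n + 1) → ℝ := pd e1 x 0 - x 0 with hA1
  have hg : Differentiable ℝ (fun u => pd e1 x u - x u) := (hdp e1).sub hdx
  have hstar : ∀ u, pd e1 x u - x u = Real.exp (u e1) • A1 := by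
    have hGd : ∀ (j : Fin n) u,
        fderiv ℝ (fun u => c u • (pd e1 x u - x u)) u (Pi.single j 1) = 0 := by
      intro j u
      rw [fderiv_fun_smul (hcdiff u) (hg u)]
      simp only [ContinuousLinearMap.add_apply, ContinuousLinearMap.smul_apply,
        ContinuousLinearMap.smulRight_apply]
      rw [fderiv_fun_sub ((hdp e1) u) (hdx u)]
      simp only [ContinuousLinearMap.sub_apply]
      rw [pd_app, pd_app, hcd]
      by_cases hj : j = e1
      · subst hj
        rw [if_pos rfl, h11 u]
        module
      · rw [if_neg hj, pd_comm hx, h1k j hj]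
        simp
    have hGconst := const_of_pd_zero (hcdiff.fun_smul hg) hGd
    intro u
    have h := hGconst u
    simp only [hc0, one_smul, Pi.zero_apply] at h
    -- h : c u • (pd e1 x u - x u) = pd e1 x 0 - x 0
    calc pd e1 x u - x u = Real.exp (u e1) • (c u • (pd e1 x u - x u)) := by
          rw [smul_smul, hcu, one_smul]
      _ = Real.exp (u e1) • A1 := by rw [h, hA1]
  -- Step 2 : for k ≠ e1, H := c • pd k x - u k • A1 is constant
  set B : Fin n → (Fin (n + 1) → ℝ) := fun k => pd k x 0 with hB
  have hLk : ∀ (k : Fin n) (v : Fin (n + 1) → ℝ) (u : Fin n → ℝ),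
      HasFDerivAt (fun u : Fin n → ℝ => u k • v)
        ((ContinuousLinearMap.proj k : (Fin n → ℝ) →L[ℝ] ℝ).smulRight v) u := by
    intro k v u
    exact ((ContinuousLinearMap.proj k :
      (Fin n → ℝ) →L[ℝ] ℝ).hasFDerivAt (x := u)).smul_const (𝕜' := ℝ) v
  have hstarstar : ∀ k : Fin n, k ≠ e1 → ∀ u,
      c u • pd k x u = u k • A1 + B k := by
    intro k hk
    have hHd : ∀ (j : Fin n) u,
        fderiv ℝ (fun u => c u • pd k x u - u k • A1) u (Pi.single j 1) = 0 := by
      intro j u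
      rw [fderiv_fun_sub ((hcdiff u).fun_smul ((hdp k) u)) (hLk k A1 u).differentiableAt]
      simp only [ContinuousLinearMap.sub_apply]
      rw [fderiv_fun_smul (hcdiff u) ((hdp k) u), (hLk k A1 u).fderiv]
      simp only [ContinuousLinearMap.add_apply, ContinuousLinearMap.smul_apply,
        ContinuousLinearMap.smulRight_apply, ContinuousLinearMap.proj_apply]
      rw [pd_app, hcd]
      rw [Pi.single_apply]
      by_cases hj : j = e1
      · subst hj
        rw [if_pos rfl, h1k k hk u, if_neg hk]
        module
      · rw [if_neg hj]
        by_cases hjk' : k = j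
        · subst hjk'
          rw [if_pos rfl, hkk k hk u, hstar u, smul_smul, mul_comm (c u), hcu]
          module
        · rw [if_neg hjk', hjk j k hj hk (fun h => hjk' h.symm) u]
          module
    have hHconst := const_of_pd_zero (((hcdiff.fun_smul (hdp k))).fun_sub
      (fun u => (hLk k A1 u).differentiableAt)) hHd
    intro u
    have h := hHconst u
    simp only [hc0, one_smul, Pi.zero_apply, zero_smul, sub_zero] at h
    -- h : c u • pd k x u - u k • A1 = pd k x 0
    rw [sub_eq_iff_eq_add] at h
    rw [h, hB]
    abel
  -- Step 3 : F := c • x - φ • A1 - S is constant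
  set φ : (Fin n → ℝ) → ℝ := fun u => 1 / 2 * ∑ k ∈ E, u k ^ 2 + u e1 with hφ
  have hφHas : ∀ u : Fin n → ℝ, HasFDerivAt φ
      ((1 / 2 : ℝ) • (∑ k ∈ E, (2 * u k) •
          (ContinuousLinearMap.proj k : (Fin n → ℝ) →L[ℝ] ℝ)) +
        ContinuousLinearMap.proj e1) u := by
    intro u
    have hsum : HasFDerivAt (fun u : Fin n → ℝ => ∑ k ∈ E, u k ^ 2)
        (∑ k ∈ E, (2 * u k) •
          (ContinuousLinearMap.proj k : (Fin n → ℝ) →L[ℝ] ℝ)) u := by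
      refine HasFDerivAt.fun_sum fun k _ => ?_
      have h := ((ContinuousLinearMap.proj k :
          (Fin n → ℝ) →L[ℝ] ℝ).hasFDerivAt (x := u)).mul
        ((ContinuousLinearMap.proj k : (Fin n → ℝ) →L[ℝ] ℝ).hasFDerivAt (x := u))
      have heq : (fun u : Fin n → ℝ => u k ^ 2) =
          fun u : Fin n → ℝ => u k * u k := by funext v; ring
      rw [heq, two_mul, add_smul]
      exact h
    exact (hsum.const_mul (1 / 2)).add
      (ContinuousLinearMap.proj e1 : (Fin n → ℝ) →L[ℝ] ℝ).hasFDerivAt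
  have hφdiff : Differentiable ℝ φ := fun u => (hφHas u).differentiableAt
  have hφd : ∀ (u : Fin n → ℝ) (j : Fin n),
      fderiv ℝ φ u (Pi.single j 1) = if j = e1 then 1 else u j := by
    intro u j
    rw [(hφHas u).fderiv]
    simp only [ContinuousLinearMap.add_apply, ContinuousLinearMap.smul_apply,
      ContinuousLinearMap.sum_apply, ContinuousLinearMap.proj_apply,
      Pi.single_apply, smul_eq_mul, mul_ite, mul_one, mul_zero]
    rw [Finset.sum_ite_eq' E j (fun k => 2 * u k)]
    by_cases hj : j = e1
    · subst hj
      rw [if_neg (by simp [hE]), if_pos rfl]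
      simp
    · rw [if_pos (by simp [hE, hj])]
      rw [if_neg hj]
      rw [if_neg (fun h : e1 = j => hj h.symm)]
      ring
  have hSHas : ∀ u : Fin n → ℝ, HasFDerivAt (fun u : Fin n → ℝ => ∑ k ∈ E, u k • B k)
      (∑ k ∈ E, (ContinuousLinearMap.proj k :
        (Fin n → ℝ) →L[ℝ] ℝ).smulRight (B k)) u :=
    fun u => HasFDerivAt.fun_sum fun k _ => hLk k (B k) u
  have hFd : ∀ (j : Fin n) u,
      fderiv ℝ (fun u => c u • x u - φ u • A1 - ∑ k ∈ E, u k • B k) u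
        (Pi.single j 1) = 0 := by
    intro j u
    have hd1 : DifferentiableAt ℝ (fun u => c u • x u) u := (hcdiff u).smul (hdx u)
    have hd2 : DifferentiableAt ℝ (fun u => φ u • A1) u :=
      (hφdiff u).smul_const A1
    rw [fderiv_fun_sub (hd1.fun_sub hd2) (hSHas u).differentiableAt,
      fderiv_fun_sub hd1 hd2]
    simp only [ContinuousLinearMap.sub_apply]
    rw [fderiv_fun_smul (hcdiff u) (hdx u), fderiv_smul_const (hφdiff u) A1,
      (hSHas u).fderiv]
    simp only [ContinuousLinearMap.add_apply, ContinuousLinearMap.smul_apply,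
      ContinuousLinearMap.smulRight_apply, ContinuousLinearMap.sum_apply,
      ContinuousLinearMap.proj_apply]
    rw [pd_app, hcd, hφd]
    have hsum : ∑ k ∈ E, (Pi.single j (1 : ℝ) : Fin n → ℝ) k • B k =
        if j ∈ E then B j else 0 := by
      simp only [Pi.single_apply, ite_smul, one_smul, zero_smul]
      exact Finset.sum_ite_eq' E j (fun k => B k)
    rw [hsum]
    by_cases hj : j = e1
    · subst hj
      rw [if_pos rfl, if_pos rfl, if_neg (by simp [hE])]
      have h := hstar u
      rw [sub_eq_iff_eq_add] at h
      rw [h, smul_add, smul_smul, mul_comm, hcu, one_smul]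
      module
    · have hss := hstarstar j hj u
      rw [if_neg hj, if_neg hj, if_pos (by simp [hE, hj]), hss]
      module
  have hFconst := const_of_pd_zero ((((hcdiff.fun_smul hdx)).fun_sub
      (fun u => (hφdiff u).smul_const A1)).fun_sub
      (fun u => (hSHas u).differentiableAt)) hFd
  -- assemble the answer
  refine ⟨fun k => if k = e1 then A1 else B k, x 0, fun u => ?_⟩
  have hAe1 : (fun k => if k = e1 then A1 else B k) (⟨0, by omega⟩ : Fin n) = A1 := by
    simp [he1]
  have hsumA : ∑ k ∈ Finset.univ.erase (⟨0, by omega⟩ : Fin n),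
      u k • (fun k => if k = e1 then A1 else B k) k = ∑ k ∈ E, u k • B k := by
    refine Finset.sum_congr rfl fun k hk => ?_
    have hk' : k ≠ e1 := Finset.ne_of_mem_erase hk
    simp only []
    rw [if_neg hk']
  rw [hAe1, hsumA]
  have h := hFconst u
  have hφ0 : φ 0 = 0 := by simp [hφ]
  simp only [hc0, one_smul, Pi.zero_apply, zero_smul, Finset.sum_const_zero,
    hφ0, sub_zero] at h
  -- h : c u • x u - φ u • A1 - ∑ k ∈ E, u k • B k = x 0
  rw [sub_sub, sub_eq_iff_eq_add] at h
  have h2 : c u • x u = φ u • A1 + ∑ k ∈ E, u k • B k + x 0 := by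
    rw [h]; abel
  calc x u = Real.exp (u e1) • (c u • x u) := by
        rw [smul_smul, hcu, one_smul]
    _ = Real.exp (u e1) • (φ u • A1 + ∑ k ∈ E, u k • B k + x 0) := by rw [h2]
end
end

section
/- The following hold: (ii) for all v1, v2 ∈ D2, the vector K(v1,v2) − (λ1/2)⟨v1,v2⟩·e1 lies in D3 (i.e. L takes values in D3); and (iii) for all v ∈ D2 and w ∈ D3, K(v,w) ∈ D2. -/
open scoped RealInnerProductSpace
open Module Submodule

noncomputable section

variable {V : Type*} [NormedAddCommGroup V] [InnerProductSpace ℝ V]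

/-- The bilinear map `L(v₁,v₂) = K(v₁,v₂) − (λ₁/2)⟨v₁,v₂⟩ e₁`. -/
def Lop (lam1 : ℝ) (e1 : V) (K : V →ₗ[ℝ] V →ₗ[ℝ] V) (v1 v2 : V) : V :=
  K v1 v2 - (lam1 / 2 * ⟪v1, v2⟫) • e1

/-- The distribution `D₂ = {v : v ⟂ e₁, K(e₁,v) = (λ₁/2)v}`. -/
def D2s (lam1 : ℝ) (e1 : V) (K : V →ₗ[ℝ] V →ₗ[ℝ] V) : Submodule ℝ V :=
  (ℝ ∙ e1)ᗮ ⊓ Module.End.eigenspace (K e1) (lam1 / 2)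

/-- The distribution `D₃ = {w : w ⟂ e₁, K(e₁,w) = μw}`. -/
def D3s (mu : ℝ) (e1 : V) (K : V →ₗ[ℝ] V →ₗ[ℝ] V) : Submodule ℝ V :=
  (ℝ ∙ e1)ᗮ ⊓ Module.End.eigenspace (K e1) mu

/-- The operator `P_v(ṽ) = K(v, L(v,ṽ))`, as a linear endomorphism of `V`. -/
def Pop (lam1 : ℝ) (e1 : V) (K : V →ₗ[ℝ] V →ₗ[ℝ] V) (v : V) : V →ₗ[ℝ] V :=
  (K v) ∘ₗ (K v - (lam1 / 2) •
    ((LinearMap.toSpanSingleton ℝ V e1) ∘ₗ (innerSL ℝ v).toLinearMap))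

/-- The eigenspace `V_v(c)` of `P_v` within the orthogonal complement of `v` in `D₂`. -/
def Vvs (lam1 c : ℝ) (e1 : V) (K : V →ₗ[ℝ] V →ₗ[ℝ] V) (v : V) : Submodule ℝ V :=
  D2s lam1 e1 K ⊓ (ℝ ∙ v)ᗮ ⊓ Module.End.eigenspace (Pop lam1 e1 K v) c

/-!
Let `A = K(e₁,·)`; it is self-adjoint, `e₁` is an eigenvector (eigenvalue `λ₁`, since
`K(e₁,e₁)` is orthogonal to `D₂` and `D₃`), and `D₂`, `D₃` are its `λ₁/2`- and `μ`-eigenspaces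
on `e₁ᗮ`. For `v ∈ D₂` and a `c`-eigenvector `Z ⟂ e₁`, parallelism applied to `(e₁, v, e₁, Z)`
gives `((A - c)² - δ) K(v,Z) ∈ ℝe₁` with `δ = λ₁²/4 - ε`. On `D₂` and `D₃` the operator
`(A - c)² - δ` is the scalar `(λ₁/2 - c)² - δ`, resp. `(μ - c)² - δ`; as `(μ - λ₁/2)² = δ ≠ 0`,
for `c = λ₁/2` it kills exactly `D₃` and for `c = μ` exactly `D₂`. Hence the `D₂`-component of
`L(v₁,v₂)` and the `D₃`-component of `K(v,w)` vanish.
-/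

theorem mem_D3s_iff {c : ℝ} {e1 x : V} {K : V →ₗ[ℝ] V →ₗ[ℝ] V} :
    x ∈ D3s c e1 K ↔ ⟪e1, x⟫ = 0 ∧ K e1 x = c • x := by
  rw [D3s, mem_inf, mem_orthogonal_singleton_iff_inner_right, Module.End.mem_eigenspace_iff]

theorem D2s_eq_D3s (lam1 : ℝ) (e1 : V) (K : V →ₗ[ℝ] V →ₗ[ℝ] V) :
    D2s lam1 e1 K = D3s (lam1 / 2) e1 K :=
  rfl

theorem Module.End.sq_sub_smul_one_apply_of_apply_eq_smul {A : Module.End ℝ V} {t c δ : ℝ}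
    {y : V} (hy : A y = t • y) :
    ((A - c • 1) ^ 2 - δ • 1 : Module.End ℝ V) y = ((t - c) ^ 2 - δ) • y := by
  simp only [sq, LinearMap.sub_apply, Module.End.mul_apply, hy, LinearMap.smul_apply,
    Module.End.one_apply, map_sub, map_smul]
  module

section CubicForm

variable {K : V →ₗ[ℝ] V →ₗ[ℝ] V} {e1 : V}

theorem isSymmetric_of_cubic (hKcub : ∀ X Y Z : V, ⟪K X Y, Z⟫ = ⟪K X Z, Y⟫) (X : V) :
    (K X).IsSymmetric :=
  fun Y Z => (hKcub X Y Z).trans (real_inner_comm Y _)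

theorem inner_eq_zero_of_mem_D3s (hKcub : ∀ X Y Z : V, ⟪K X Y, Z⟫ = ⟪K X Z, Y⟫) {a b : ℝ}
    (hab : a ≠ b) {x y : V} (hx : x ∈ D3s a e1 K) (hy : y ∈ D3s b e1 K) : ⟪x, y⟫ = 0 :=
  (isSymmetric_of_cubic hKcub e1).orthogonalFamily_eigenspaces hab ⟨x, (mem_inf.1 hx).2⟩
    ⟨y, (mem_inf.1 hy).2⟩

theorem inner_K_apply_of_mem_D3s (hKsymm : ∀ X Y : V, K X Y = K Y X)
    (hKcub : ∀ X Y Z : V, ⟪K X Y, Z⟫ = ⟪K X Z, Y⟫) {c : ℝ} {v : V} (hv : v ∈ D3s c e1 K)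
    (Z : V) : ⟪e1, K v Z⟫ = c * ⟪v, Z⟫ := by
  rw [real_inner_comm, hKcub, hKsymm, (mem_D3s_iff.1 hv).2, real_inner_smul_left]

theorem K_self_mem_orthogonal_D3s (hKcub : ∀ X Y Z : V, ⟪K X Y, Z⟫ = ⟪K X Z, Y⟫) (c : ℝ) :
    K e1 e1 ∈ (D3s c e1 K)ᗮ := fun y hy => by
  obtain ⟨hy1, hy2⟩ := mem_D3s_iff.1 hy
  rw [real_inner_comm, hKcub, hy2, real_inner_smul_left, real_inner_comm, hy1, mul_zero]

theorem self_mem_orthogonal_D3s (c : ℝ) : e1 ∈ (D3s c e1 K)ᗮ := fun y hy => by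
  rw [real_inner_comm]; exact (mem_D3s_iff.1 hy).1

variable {a b : ℝ}

theorem K_self_eq_inner_smul (hsplit : (ℝ ∙ e1) ⊔ D3s a e1 K ⊔ D3s b e1 K = ⊤)
    (he1 : ‖e1‖ = 1) (hKcub : ∀ X Y Z : V, ⟪K X Y, Z⟫ = ⟪K X Z, Y⟫) :
    K e1 e1 = ⟪K e1 e1, e1⟫ • e1 := by
  rw [← sub_eq_zero, ← mem_bot ℝ, ← top_orthogonal_eq_bot, ← hsplit, ← inf_orthogonal,
    ← inf_orthogonal]
  refine mem_inf.2 ⟨mem_inf.2 ⟨?_, ?_⟩, ?_⟩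
  · rw [mem_orthogonal_singleton_iff_inner_right, inner_sub_right, real_inner_smul_right,
      real_inner_self_eq_norm_sq, he1, real_inner_comm]
    ring
  all_goals
    exact sub_mem (K_self_mem_orthogonal_D3s hKcub _) (smul_mem _ _ (self_mem_orthogonal_D3s _))

theorem orthogonal_span_le_sup_D3s (hsplit : (ℝ ∙ e1) ⊔ D3s a e1 K ⊔ D3s b e1 K = ⊤)
    (he1 : ‖e1‖ = 1) : (ℝ ∙ e1)ᗮ ≤ D3s a e1 K ⊔ D3s b e1 K := by
  intro x hx
  have hx_top : x ∈ (ℝ ∙ e1) ⊔ D3s a e1 K ⊔ D3s b e1 K := hsplit ▸ mem_top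
  obtain ⟨_, hcy, z, hz, rfl⟩ := mem_sup.1 hx_top
  obtain ⟨_, hc, y, hy, rfl⟩ := mem_sup.1 hcy
  obtain ⟨c, rfl⟩ := mem_span_singleton.1 hc
  have hc0 : c = 0 := by
    rw [mem_orthogonal_singleton_iff_inner_right, inner_add_right, inner_add_right,
      real_inner_smul_right, real_inner_self_eq_norm_sq, he1, (mem_D3s_iff.1 hy).1,
      (mem_D3s_iff.1 hz).1] at hx
    linarith
  rw [hc0, zero_smul, zero_add]
  exact add_mem_sup hy hz

theorem mem_D3s_of_sq_sub_apply_mem_span (hsplit : (ℝ ∙ e1) ⊔ D3s a e1 K ⊔ D3s b e1 K = ⊤)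
    (he1 : ‖e1‖ = 1) {c δ : ℝ} (ha : (a - c) ^ 2 ≠ δ) (hb : (b - c) ^ 2 = δ)
    {x : V} (hx : ⟪e1, x⟫ = 0)
    (hrel : ((K e1 - c • 1) ^ 2 - δ • 1 : Module.End ℝ V) x ∈ ℝ ∙ e1) :
    x ∈ D3s b e1 K := by
  obtain ⟨y, hy, z, hz, rfl⟩ := mem_sup.1 <|
    orthogonal_span_le_sup_D3s hsplit he1 (mem_orthogonal_singleton_iff_inner_right.2 hx)
  rw [map_add, Module.End.sq_sub_smul_one_apply_of_apply_eq_smul (mem_D3s_iff.1 hy).2,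
    Module.End.sq_sub_smul_one_apply_of_apply_eq_smul (mem_D3s_iff.1 hz).2, hb, sub_self,
    zero_smul, add_zero] at hrel
  have hy0 : ((a - c) ^ 2 - δ) • y = 0 := by
    rw [← mem_bot ℝ, ← inf_orthogonal_eq_bot (ℝ ∙ e1)]
    exact ⟨hrel, smul_mem _ _ (mem_inf.1 hy).1⟩
  rw [(smul_eq_zero.1 hy0).resolve_left (sub_ne_zero.2 ha), zero_add]
  exact hz

theorem sq_sub_apply_K_of_parallel {ε lam1 c : ℝ} (hKsymm : ∀ X Y : V, K X Y = K Y X)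
    (hpar : ∀ X Y Z U : V,
      Rc ε K X Y (K Z U) = K (Rc ε K X Y Z) U + K Z (Rc ε K X Y U))
    (he1 : ‖e1‖ = 1) (hKee : K e1 e1 = lam1 • e1) {v Z : V} (hv : v ∈ D2s lam1 e1 K)
    (hZ : Z ∈ D3s c e1 K) :
    ((K e1 - c • 1) ^ 2 - (lam1 ^ 2 / 4 - ε) • 1 : Module.End ℝ V) (K v Z) =
      (ε * (lam1 - c) * ⟪v, Z⟫) • e1 := by
  obtain ⟨hv1, hv2⟩ := mem_D3s_iff.1 hv
  obtain ⟨hZ1, hZ2⟩ := mem_D3s_iff.1 hZ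
  have h11 : ⟪e1, e1⟫ = (1 : ℝ) := by rw [real_inner_self_eq_norm_sq, he1, one_pow]
  have H := hpar e1 v e1 Z
  simp only [Rc, hZ2, hKee, hKsymm v e1, hv2, map_smul, map_add, map_sub,
    LinearMap.smul_apply, LinearMap.add_apply, LinearMap.sub_apply, real_inner_smul_right,
    h11, hZ1, real_inner_comm e1 v, hv1, smul_smul, smul_sub, zero_smul,
    one_smul, mul_zero, sub_zero, smul_zero, map_zero, LinearMap.zero_apply] at H
  simp only [sq, LinearMap.sub_apply, Module.End.mul_apply, LinearMap.smul_apply,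
    Module.End.one_apply, map_sub, map_smul]
  linear_combination (norm := module) H

end CubicForm

theorem stmt_4_general {V : Type*} [NormedAddCommGroup V] [InnerProductSpace ℝ V]
    (ε : ℝ)
    (K : V →ₗ[ℝ] V →ₗ[ℝ] V)
    (hKsymm : ∀ X Y : V, K X Y = K Y X)
    (hKcub : ∀ X Y Z : V, ⟪K X Y, Z⟫ = ⟪K X Z, Y⟫)
    (hpar : ∀ X Y Z U : V,
      Rc ε K X Y (K Z U) = K (Rc ε K X Y Z) U + K Z (Rc ε K X Y U))
    (e1 : V) (he1 : ‖e1‖ = 1)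
    (lam1 μ : ℝ)
    (hlam1 : lam1 = ⟪K e1 e1, e1⟫)
    (hdisc : 0 < lam1 ^ 2 - 4 * ε)
    (hμ : μ = (lam1 - Real.sqrt (lam1 ^ 2 - 4 * ε)) / 2)
    (hsplit : (ℝ ∙ e1) ⊔ D2s lam1 e1 K ⊔ D3s μ e1 K = ⊤)
    :
    (∀ v1 ∈ D2s lam1 e1 K, ∀ v2 ∈ D2s lam1 e1 K,
        K v1 v2 - (lam1 / 2 * ⟪v1, v2⟫) • e1 ∈ D3s μ e1 K) ∧
    (∀ v ∈ D2s lam1 e1 K, ∀ w ∈ D3s μ e1 K, K v w ∈ D2s lam1 e1 K) := by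
  rw [D2s_eq_D3s] at hsplit ⊢
  have hδ : (μ - lam1 / 2) ^ 2 = lam1 ^ 2 / 4 - ε := by
    rw [hμ]; linear_combination Real.sq_sqrt hdisc.le / 4
  have hδ0 : lam1 ^ 2 / 4 - ε ≠ 0 := by linarith
  have hKee : K e1 e1 = lam1 • e1 := hlam1 ▸ K_self_eq_inner_smul hsplit he1 hKcub
  refine ⟨fun v1 hv1 v2 hv2 => ?_, fun v hv w hw => ?_⟩
  · refine mem_D3s_of_sq_sub_apply_mem_span (c := lam1 / 2) hsplit he1
      (by simpa using hδ0.symm) hδ ?_ ?_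
    · rw [inner_sub_right, inner_K_apply_of_mem_D3s hKsymm hKcub hv1, real_inner_smul_right,
        real_inner_self_eq_norm_sq, he1]
      ring
    · rw [map_sub, sq_sub_apply_K_of_parallel hKsymm hpar he1 hKee hv1 hv2, map_smul,
        Module.End.sq_sub_smul_one_apply_of_apply_eq_smul hKee, smul_smul]
      exact sub_mem (smul_mem _ _ (mem_span_singleton_self e1))
        (smul_mem _ _ (mem_span_singleton_self e1))
  · have hne : lam1 / 2 ≠ μ := fun h => hδ0 (by rw [← hδ, h, sub_self, sq, zero_mul])
    rw [sup_right_comm] at hsplit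
    refine mem_D3s_of_sq_sub_apply_mem_span (c := μ) hsplit he1 (by simpa using hδ0.symm)
      (by rw [← hδ]; ring) ?_ ?_
    · rw [inner_K_apply_of_mem_D3s hKsymm hKcub hv, inner_eq_zero_of_mem_D3s hKcub hne hv hw,
        mul_zero]
    · rw [sq_sub_apply_K_of_parallel hKsymm hpar he1 hKee hv hw]
      exact smul_mem _ _ (mem_span_singleton_self e1)

/-- Lemma 4.2 (ii) and (iii): `L` takes values in `D₃`, and `K` maps `D₂ × D₃` into `D₂`. -/
theorem stmt_4 {V : Type*} [NormedAddCommGroup V] [InnerProductSpace ℝ V]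
    (n m : ℕ) (hn : finrank ℝ V = n) (hn2 : 2 ≤ n)
    (ε : ℝ) (hε : ε = 1 ∨ ε = -1)
    (K : V →ₗ[ℝ] V →ₗ[ℝ] V)
    (hKsymm : ∀ X Y : V, K X Y = K Y X)
    (hKcub : ∀ X Y Z : V, ⟪K X Y, Z⟫ = ⟪K X Z, Y⟫)
    (hpar : ∀ X Y Z U : V,
      Rc ε K X Y (K Z U) = K (Rc ε K X Y Z) U + K Z (Rc ε K X Y U))
    (e1 : V) (he1 : ‖e1‖ = 1)
    (lam1 η μ τ : ℝ)
    (hlam1 : lam1 = ⟪K e1 e1, e1⟫) (hlam1pos : 0 < lam1)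
    (hmax : ∀ u : V, ‖u‖ = 1 → ⟪K u u, u⟫ ≤ lam1)
    (hdisc : 0 < lam1 ^ 2 - 4 * ε)
    (hη : η = Real.sqrt (lam1 ^ 2 - 4 * ε) / 2)
    (hμ : μ = (lam1 - Real.sqrt (lam1 ^ 2 - 4 * ε)) / 2)
    (hτ : τ = η * (η + lam1 / 2) / 4)
    (hm2 : 2 ≤ m) (hmn : m ≤ n - 1)
    (hdimD2 : finrank ℝ (D2s lam1 e1 K) = m - 1)
    (hsplit : (ℝ ∙ e1) ⊔ D2s lam1 e1 K ⊔ D3s μ e1 K = ⊤)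
    :
    (∀ v1 ∈ D2s lam1 e1 K, ∀ v2 ∈ D2s lam1 e1 K,
        K v1 v2 - (lam1 / 2 * ⟪v1, v2⟫) • e1 ∈ D3s μ e1 K) ∧
    (∀ v ∈ D2s lam1 e1 K, ∀ w ∈ D3s μ e1 K, K v w ∈ D2s lam1 e1 K) :=
  stmt_4_general ε K hKsymm hKcub hpar e1 he1 lam1 μ hlam1 hdisc hμ hsplit

end
end

section
/- Let L : V × V → W be isotropic with constant c. Then for any orthonormal vectors v1, v2, v3, v4 ∈ V: (1) ⟨L(v1,v1),L(v1,v2)⟩ = 0; (2) ⟨L(v1,v1),L(v2,v2)⟩ + 2⟨L(v1,v2),L(v1,v2)⟩ = c; (3) ⟨L(v1,v1),L(v2,v3)⟩ + 2⟨L(v1,v2),L(v1,v3)⟩ = 0; (4) ⟨L(v1,v2),L(v3,v4)⟩ + ⟨L(v1,v3),L(v2,v4)⟩ + ⟨L(v1,v4),L(v2,v3)⟩ = 0. -/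
/-!
Put `K v w = (L v w, ⟪v, w⟫) ∈ W × ℝ` and `B (p, s) (q, t) = ⟪p, q⟫ - c s t`. Isotropy with
constant `c` says exactly that every `K v v` is `B`-null, i.e. the quartic `v ↦ B (K v v) (K v v)`
vanishes identically. Polarizing it one variable at a time (`x ± y`, then `y ± z`, then `a ± b`)
gives identities for `B ∘ K` with two, three and four arguments, valid for any symmetric `B` and
`K`; at orthonormal vectors the `c`-part of `B ∘ K` is `c` or `0`.
-/

open scoped RealInnerProductSpace
open Module

section NullPolarization

variable {R E V : Type*} [Field R] [CharZero R] [AddCommGroup E] [Module R E]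
  [AddCommGroup V] [Module R V] (B : LinearMap.BilinForm R E) (K : V →ₗ[R] V →ₗ[R] E)
  (hB : ∀ u w, B u w = B w u) (hK : ∀ x y, K x y = K y x)
  (hnull : ∀ v, B (K v v) (K v v) = 0)

include hB hK hnull

theorem bilin_null_polarization_two (x y : V) :
    B (K x x) (K y y) + 2 * B (K x y) (K x y) = 0 := by
  have hadd := hnull (x + y)
  have hsub := hnull (x - y)
  simp only [map_add, map_sub, LinearMap.add_apply, LinearMap.sub_apply, hK y x] at hadd hsub
  linear_combination (hadd + hsub - 2 * hnull x - 2 * hnull y - 2 * hB (K y y) (K x x)) / 4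

theorem bilin_null_polarization_three (x y z : V) :
    B (K x x) (K y z) + 2 * B (K x y) (K x z) = 0 := by
  have hadd := bilin_null_polarization_two B K hB hK hnull x (y + z)
  have hsub := bilin_null_polarization_two B K hB hK hnull x (y - z)
  simp only [map_add, map_sub, LinearMap.add_apply, LinearMap.sub_apply, hK z y] at hadd hsub
  linear_combination (hadd - hsub) / 4 - hB (K x z) (K x y)

theorem bilin_null_polarization_one (x y : V) : B (K x x) (K x y) = 0 := by
  linear_combination bilin_null_polarization_three B K hB hK hnull x x y / 3

theorem bilin_null_polarization_four (a b c d : V) :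
    B (K a b) (K c d) + B (K a c) (K b d) + B (K a d) (K b c) = 0 := by
  have hadd := bilin_null_polarization_three B K hB hK hnull (a + b) c d
  have hsub := bilin_null_polarization_three B K hB hK hnull (a - b) c d
  simp only [map_add, map_sub, LinearMap.add_apply, LinearMap.sub_apply, hK b a] at hadd hsub
  linear_combination (hadd - hsub) / 4 - hB (K b c) (K a d)

end NullPolarization

section Isotropic

variable {V W : Type*} [NormedAddCommGroup V] [InnerProductSpace ℝ V]
  [NormedAddCommGroup W] [InnerProductSpace ℝ W]

def LinearMap.withInner (L : V →ₗ[ℝ] V →ₗ[ℝ] W) : V →ₗ[ℝ] V →ₗ[ℝ] W × ℝ :=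
  LinearMap.mk₂ ℝ (fun v w => (L v w, ⟪v, w⟫))
    (fun _ _ _ => by simp [inner_add_left]) (fun _ _ _ => by simp [real_inner_smul_left])
    (fun _ _ _ => by simp [inner_add_right]) (fun _ _ _ => by simp [real_inner_smul_right])

variable (W) in
def isotropyForm (c : ℝ) : LinearMap.BilinForm ℝ (W × ℝ) :=
  LinearMap.mk₂ ℝ (fun p q => ⟪p.1, q.1⟫ - c * (p.2 * q.2))
    (fun _ _ _ => by simp only [Prod.fst_add, Prod.snd_add, inner_add_left]; ring)
    (fun _ _ _ => by
      simp only [Prod.smul_fst, Prod.smul_snd, real_inner_smul_left, smul_eq_mul]; ring)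
    (fun _ _ _ => by simp only [Prod.fst_add, Prod.snd_add, inner_add_right]; ring)
    (fun _ _ _ => by
      simp only [Prod.smul_fst, Prod.smul_snd, real_inner_smul_right, smul_eq_mul]; ring)

theorem isotropyForm_withInner (c : ℝ) (L : V →ₗ[ℝ] V →ₗ[ℝ] W) (a b x y : V) :
    isotropyForm W c (L.withInner a b) (L.withInner x y) =
      ⟪L a b, L x y⟫ - c * (⟪a, b⟫ * ⟪x, y⟫) :=
  rfl

theorem isotropyForm_comm (c : ℝ) (p q : W × ℝ) :
    isotropyForm W c p q = isotropyForm W c q p := by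
  simp only [isotropyForm, LinearMap.mk₂_apply, real_inner_comm]
  ring

theorem LinearMap.withInner_comm {L : V →ₗ[ℝ] V →ₗ[ℝ] W} (hsymm : ∀ x y, L x y = L y x)
    (x y : V) : L.withInner x y = L.withInner y x := by
  simp only [LinearMap.withInner, LinearMap.mk₂_apply, hsymm x y, real_inner_comm]

theorem isotropyForm_withInner_self {c : ℝ} {L : V →ₗ[ℝ] V →ₗ[ℝ] W}
    (hiso : ∀ v : V, ⟪L v v, L v v⟫ = c * ⟪v, v⟫ ^ 2) (v : V) :
    isotropyForm W c (L.withInner v v) (L.withInner v v) = 0 := by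
  rw [isotropyForm_withInner, hiso]
  ring

end Isotropic

theorem stmt_6_general {V W : Type*} [NormedAddCommGroup V] [InnerProductSpace ℝ V]
    [NormedAddCommGroup W] [InnerProductSpace ℝ W]
    (c : ℝ) (L : V →ₗ[ℝ] V →ₗ[ℝ] W)
    (hsymm : ∀ x y : V, L x y = L y x)
    (hiso : ∀ v : V, ⟪L v v, L v v⟫ = c * ⟪v, v⟫ ^ 2)
    (v1 v2 v3 v4 : V) (hON : Orthonormal ℝ ![v1, v2, v3, v4]) :
    ⟪L v1 v1, L v1 v2⟫ = 0 ∧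
    ⟪L v1 v1, L v2 v2⟫ + 2 * ⟪L v1 v2, L v1 v2⟫ = c ∧
    ⟪L v1 v1, L v2 v3⟫ + 2 * ⟪L v1 v2, L v1 v3⟫ = 0 ∧
    ⟪L v1 v2, L v3 v4⟫ + ⟪L v1 v3, L v2 v4⟫ + ⟪L v1 v4, L v2 v3⟫ = 0 := by
  have hB := isotropyForm_comm (W := W) c
  have hK := LinearMap.withInner_comm hsymm
  have hnull := isotropyForm_withInner_self hiso
  have hunit (i : Fin 4) : ⟪![v1, v2, v3, v4] i, ![v1, v2, v3, v4] i⟫ = 1 := by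
    rw [real_inner_self_eq_norm_sq, hON.norm_eq_one, one_pow]
  have horth {i j : Fin 4} (hij : i ≠ j) := hON.inner_eq_zero hij
  have h11 : ⟪v1, v1⟫ = 1 := hunit 0
  have h22 : ⟪v2, v2⟫ = 1 := hunit 1
  have h12 : ⟪v1, v2⟫ = 0 := horth (i := 0) (j := 1) (by decide)
  have h13 : ⟪v1, v3⟫ = 0 := horth (i := 0) (j := 2) (by decide)
  have h14 : ⟪v1, v4⟫ = 0 := horth (i := 0) (j := 3) (by decide)
  have h23 : ⟪v2, v3⟫ = 0 := horth (i := 1) (j := 2) (by decide)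
  have h24 : ⟪v2, v4⟫ = 0 := horth (i := 1) (j := 3) (by decide)
  have h34 : ⟪v3, v4⟫ = 0 := horth (i := 2) (j := 3) (by decide)
  have e1 := bilin_null_polarization_one _ _ hB hK hnull v1 v2
  have e2 := bilin_null_polarization_two _ _ hB hK hnull v1 v2
  have e3 := bilin_null_polarization_three _ _ hB hK hnull v1 v2 v3
  have e4 := bilin_null_polarization_four _ _ hB hK hnull v1 v2 v3 v4
  simp only [isotropyForm_withInner, h11, h22, h12, h13, h14, h23, h24, h34] at e1 e2 e3 e4
  refine ⟨?_, ?_, ?_, ?_⟩ <;> linarith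

/-- Lemma 4.4: the standard identities satisfied by an isotropic symmetric bilinear
map `L : V × V → W` with constant `c`, on orthonormal vectors `v₁, v₂, v₃, v₄`. -/
theorem stmt_6 {V W : Type*} [NormedAddCommGroup V] [InnerProductSpace ℝ V]
    [NormedAddCommGroup W] [InnerProductSpace ℝ W]
    [FiniteDimensional ℝ V] (hdim : 1 ≤ finrank ℝ V)
    (c : ℝ) (L : V →ₗ[ℝ] V →ₗ[ℝ] W)
    (hsymm : ∀ x y : V, L x y = L y x)
    (hiso : ∀ v : V, ⟪L v v, L v v⟫ = c * ⟪v, v⟫ ^ 2)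
    (v1 v2 v3 v4 : V) (hON : Orthonormal ℝ ![v1, v2, v3, v4]) :
    ⟪L v1 v1, L v1 v2⟫ = 0 ∧
    ⟪L v1 v1, L v2 v2⟫ + 2 * ⟪L v1 v2, L v1 v2⟫ = c ∧
    ⟪L v1 v1, L v2 v3⟫ + 2 * ⟪L v1 v2, L v1 v3⟫ = 0 ∧
    ⟪L v1 v2, L v3 v4⟫ + ⟪L v1 v3, L v2 v4⟫ + ⟪L v1 v4, L v2 v3⟫ = 0 :=
  stmt_6_general c L hsymm hiso v1 v2 v3 v4 hON
end
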